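/- For every k ≥ 0, E_k ⊆ Ē_k; that is, every extended type that occurs as etype(X_I) for a structure class X_I of deficiency k in some finite group G of even order lies in the feasible set Ē_k. -/

import Mathlib

/-- The minimum excludant of a set of natural numbers. -/
noncomputable def mex (S : Set ℕ) : ℕ := sInf {n : ℕ | n ∉ S}

open Classical in
/-- The nim-value of a position in the achievement game GEN(G): a position `P`
is terminal when it generates `G` (so its nim-value is `mex ∅ = 0`); otherwise
its options are the sets `insert g P` for `g ∉ P`. -/
noncomputable def gameNim {G : Type*} [Group G] [Fintype G] (P : Finset G) : ℕ :=
  if Subgroup.closure (P : Set G) = ⊤ then 0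
  else mex {n : ℕ | ∃ g : {g : G // g ∉ P}, gameNim (insert g.1 P) = n}
termination_by Pᶜ.card
decreasing_by
  exact Finset.card_lt_card (by
    constructor
    · intro x hx
      simp only [Finset.mem_compl, Finset.mem_insert] at hx ⊢
      exact fun h => hx (Or.inr h)
    · intro hsub
      have h1 : g.1 ∈ Pᶜ := Finset.mem_compl.mpr g.2
      have h2 : g.1 ∈ (insert g.1 P)ᶜ := hsub h1
      simp at h2)


/-- ⌈P⌉: the intersection of all maximal subgroups of `G` containing `P`
(equal to `G`, i.e. `⊤`, if no maximal subgroup contains `P`). -/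
def ceilSet {G : Type*} [Group G] (P : Set G) : Subgroup G :=
  sInf {M : Subgroup G | IsCoatom M ∧ P ⊆ (M : Set G)}

/-- The deficiency of a subset `S` of a finite group `G`: the minimum size of a
subset `Q` of `G` such that `S ∪ Q` generates `G`. -/
noncomputable def deficiency {G : Type*} [Group G] [Fintype G] (S : Set G) : ℕ :=
  sInf {n : ℕ | ∃ Q : Finset G, Q.card = n ∧ Subgroup.closure (S ∪ (Q : Set G)) = ⊤}

/-- The structure class `X_J` is an option of the structure class `X_I`. -/
def IsStructOption {G : Type*} [Group G] (I J : Subgroup G) : Prop :=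
  ∃ g ∉ I, ceilSet ((I : Set G) ∪ {g}) = J

/-- Extended types: quadruples `(p, e, o, s)`. -/
abbrev EType : Type := ℕ × ℕ × ℕ × ℕ

/-- `E_T`: the set of second components of a set of types. -/
def typeE (T : Set (ℕ × ℕ × ℕ)) : Set ℕ := {e : ℕ | ∃ t ∈ T, t.2.1 = e}

/-- `O_T`: the set of third components of a set of types. -/
def typeO (T : Set (ℕ × ℕ × ℕ)) : Set ℕ := {o : ℕ | ∃ t ∈ T, t.2.2 = o}

/-- `mex₀(T) = (0, e_T, mex(E_T ∪ {e_T}))` where `e_T = mex(O_T)`. -/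
noncomputable def mex0 (T : Set (ℕ × ℕ × ℕ)) : ℕ × ℕ × ℕ :=
  (0, mex (typeO T), mex (typeE T ∪ {mex (typeO T)}))

/-- `mex₁(T) = (1, mex(O_T ∪ {o_T}), o_T)` where `o_T = mex(E_T)`. -/
noncomputable def mex1 (T : Set (ℕ × ℕ × ℕ)) : ℕ × ℕ × ℕ :=
  (1, mex (typeO T ∪ {mex (typeE T)}), mex (typeE T))

/-- `π₁(A)`: the set of first coordinates. -/
def pi1 (A : Set EType) : Set ℕ := {p : ℕ | ∃ t ∈ A, t.1 = p}

/-- `π₄(A)`: the set of fourth coordinates. -/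
def pi4 (A : Set EType) : Set ℕ := {s : ℕ | ∃ t ∈ A, t.2.2.2 = s}

/-- `π̃₄(A)`: drop the fourth coordinate. -/
def dropPi4 (A : Set EType) : Set (ℕ × ℕ × ℕ) :=
  {u : ℕ × ℕ × ℕ | ∃ t ∈ A, (t.1, t.2.1, t.2.2.1) = u}

open Classical in
/-- `min(π₁(A))`, with the convention that it equals `1` when `A = ∅`. -/
noncomputable def minPi1 (A : Set EType) : ℕ := if A = ∅ then 1 else sInf (pi1 A)

/-- `emex₀(A,B) := (mex₀(π̃₄(A ∪ B)), 2)`. -/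
noncomputable def emex0 (A B : Set EType) : EType :=
  ((mex0 (dropPi4 (A ∪ B))).1, (mex0 (dropPi4 (A ∪ B))).2.1,
    (mex0 (dropPi4 (A ∪ B))).2.2, 2)

/-- `emex₁(A,B) := (mex₁(π̃₄(A ∪ B)), 1 − min(π₁(A)))`. -/
noncomputable def emex1 (A B : Set EType) : EType :=
  ((mex1 (dropPi4 (A ∪ B))).1, (mex1 (dropPi4 (A ∪ B))).2.1,
    (mex1 (dropPi4 (A ∪ B))).2.2, 1 - minPi1 A)

/-- `(A,B)` is 0-feasible. -/
def Feasible0 (A B : Set EType) : Prop := B ≠ ∅ ∧ 1 ∉ pi1 (A ∪ B)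

/-- `(A,B)` is 1-feasible. -/
def Feasible1 (A B : Set EType) : Prop :=
  B ≠ ∅ ∧ 0 ∈ pi1 (A ∪ B) ∧ (1 ∈ pi4 A → 0 ∈ pi1 A) ∧ (0 ∈ pi4 B → 0 ∉ pi1 A)

/-- The doubly indexed feasible sets `Ē_{k,l}` of extended types, with
`Ebarkl 0 l = Ē₀ = {(0,0,0,2)}` for every `l`. -/
noncomputable def Ebarkl : ℕ → ℕ → Set EType
  | 0, _ => {((0, 0, 0, 2) : EType)}
  | (k + 1), 0 =>
      {t : EType | ∃ B : Set EType, B ⊆ (⋃ l, Ebarkl k l) ∧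
        ((Feasible0 ∅ B ∧ t = emex0 ∅ B) ∨ (Feasible1 ∅ B ∧ t = emex1 ∅ B))}
  | (k + 1), (l + 1) =>
      {t : EType | ∃ A B : Set EType, A ⊆ Ebarkl (k + 1) l ∧
        B ⊆ (⋃ l, Ebarkl k l) ∧
        ((Feasible0 A B ∧ t = emex0 A B) ∨ (Feasible1 A B ∧ t = emex1 A B))}
  termination_by k l => (k, l)

/-- The feasible set `Ē_k = ⋃_l Ē_{k,l}`. -/
noncomputable def Ebar (k : ℕ) : Set EType := ⋃ l, Ebarkl k l

/-- `t` is the extended type of the structure class `X_I`: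
`t = (pty(|I|), e, o, s)` where `e` (resp. `o`) is the common nim-value of the
(existing) positions in `X_I` of even (resp. odd) cardinality, and `s` is the
smoothness of `X_I`. -/
def IsEtypeOf (G : Type) [Group G] [Fintype G] (I : Subgroup G) (t : EType) : Prop :=
  t.1 = Nat.card I % 2 ∧
  (∃ P : Finset G, ceilSet (P : Set G) = I ∧ Even P.card) ∧
  (∀ P : Finset G, ceilSet (P : Set G) = I → Even P.card → gameNim P = t.2.1) ∧
  (∃ P : Finset G, ceilSet (P : Set G) = I ∧ Odd P.card) ∧
  (∀ P : Finset G, ceilSet (P : Set G) = I → Odd P.card → gameNim P = t.2.2.1) ∧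
  (Even (Nat.card I) → t.2.2.2 = 2) ∧
  (Odd (Nat.card I) →
    ((∃ J : Subgroup G, IsStructOption I J ∧ Even (Nat.card J) ∧
        deficiency (J : Set G) = deficiency (I : Set G)) → t.2.2.2 = 1) ∧
    (¬ (∃ J : Subgroup G, IsStructOption I J ∧ Even (Nat.card J) ∧
        deficiency (J : Set G) = deficiency (I : Set G)) → t.2.2.2 = 0))

/-- `E_k`: the set of extended types occurring for structure classes of
deficiency `k` in finite groups of even order. -/
def Espec (k : ℕ) : Set EType :=
  {t : EType | ∃ (G : Type) (_ : Group G) (_ : Fintype G),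
    Even (Fintype.card G) ∧ ∃ I : Subgroup G,
      ceilSet (I : Set G) = I ∧ deficiency (I : Set G) = k ∧ IsEtypeOf G I t}

/-!
The nim-value of a position `P` depends only on `⌈P⌉` and on the parity of `|P|`: a move either
stays in the class of `⌈P⌉`, flipping the parity, or lands in a class that is an option of `⌈P⌉`.
So every subgroup `I` carries a type `(pty |I|, e, o)` obtained from the types of its options by
`mex₀` or `mex₁`. The options of `I` have deficiency `δ(I)` or `δ(I) - 1`, and some option has the
smaller one; collecting their extended types into `A` and `B` accordingly, induction on
`|G| - |I|` gives `etype I = emex_p(A, B)` with `(A, B)` `p`-feasible, `p = pty |I|`.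
For `|I|` odd the feasibility conditions come from involutions, which exist because `|G|` is
even: adjoining an involution `u` to `I` gives an option of even order, whose deficiency is at
least that of any subgroup containing `I` and `u`.
-/

open Subgroup Set

section Mex

variable {S : Set ℕ} {n a : ℕ}

lemma mex_le_of_notMem (h : n ∉ S) : mex S ≤ n := Nat.sInf_le h

lemma mem_of_lt_mex (h : n < mex S) : n ∈ S := not_not.mp (Nat.notMem_of_lt_sInf h)

lemma mex_notMem (hS : S.Finite) : mex S ∉ S := Nat.sInf_mem hS.infinite_compl.nonempty

lemma mex_union_singleton (hS : S.Finite) (ha : a ≠ mex S) : mex (S ∪ {a}) = mex S := by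
  have hS' : (S ∪ {a}).Finite := hS.union (finite_singleton a)
  refine le_antisymm (mex_le_of_notMem ?_) (le_of_not_gt fun h ↦ ?_)
  · rintro (h | h)
    exacts [mex_notMem hS h, ha (mem_singleton_iff.mp h).symm]
  · exact mex_notMem hS' (Or.inl (mem_of_lt_mex h))

lemma mex_union_singleton_ne (hS : S.Finite) : mex (S ∪ {a}) ≠ a :=
  fun h ↦ mex_notMem (hS.union (finite_singleton a)) (by rw [h]; exact Or.inr rfl)

end Mex

section Types

variable {T : Set (ℕ × ℕ × ℕ)}

lemma typeE_image {α : Type*} (f : α → ℕ × ℕ × ℕ) (s : Set α) :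
    typeE (f '' s) = (fun a ↦ (f a).2.1) '' s := by
  ext; simp [typeE]

lemma typeO_image {α : Type*} (f : α → ℕ × ℕ × ℕ) (s : Set α) :
    typeO (f '' s) = (fun a ↦ (f a).2.2) '' s := by
  ext; simp [typeO]

lemma typeE_finite (hT : T.Finite) : (typeE T).Finite :=
  (hT.image fun t ↦ t.2.1).subset fun _ ⟨t, ht, he⟩ ↦ ⟨t, ht, he⟩

lemma typeO_finite (hT : T.Finite) : (typeO T).Finite :=
  (hT.image fun t ↦ t.2.2).subset fun _ ⟨t, ht, he⟩ ↦ ⟨t, ht, he⟩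

/- Both `mex₀ T = (0, e, o)` and `mex₁ T = (1, e, o)` solve `e = mex (O_T ∪ {o})`,
`o = mex (E_T ∪ {e})`; for each of them one of the two equations is its definition. -/
lemma mex0_fst_eq (hT : T.Finite) : (mex0 T).2.1 = mex (typeO T ∪ {(mex0 T).2.2}) :=
  (mex_union_singleton (typeO_finite hT) (mex_union_singleton_ne (typeE_finite hT))).symm

lemma mex1_snd_eq (hT : T.Finite) : (mex1 T).2.2 = mex (typeE T ∪ {(mex1 T).2.1}) :=
  (mex_union_singleton (typeE_finite hT) (mex_union_singleton_ne (typeO_finite hT))).symm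

end Types

section CeilSet

variable {G : Type*} [Group G]

lemma subset_ceilSet (S : Set G) : S ⊆ ceilSet S :=
  fun _ hx ↦ mem_sInf.mpr fun _ hM ↦ hM.2 hx

lemma ceilSet_le_of_isCoatom {S : Set G} {M : Subgroup G} (hM : IsCoatom M) (h : S ⊆ M) :
    ceilSet S ≤ M :=
  sInf_le ⟨hM, h⟩

lemma ceilSet_mono {S T : Set G} (h : S ⊆ T) : ceilSet S ≤ ceilSet T :=
  sInf_le_sInf fun _ hM ↦ ⟨hM.1, h.trans hM.2⟩

lemma ceilSet_union_ceilSet (S X : Set G) : ceilSet (ceilSet S ∪ X) = ceilSet (S ∪ X) := by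
  unfold ceilSet
  congr 1
  ext M
  refine and_congr_right fun hM ↦ ?_
  rw [union_subset_iff, union_subset_iff]
  exact and_congr_left' ⟨(subset_ceilSet S).trans, ceilSet_le_of_isCoatom hM⟩

lemma ceilSet_ceilSet (S : Set G) : ceilSet (ceilSet S : Set G) = ceilSet S := by
  simpa using ceilSet_union_ceilSet S ∅

lemma ceilSet_insert_of_mem {S : Set G} {g : G} (hg : g ∈ ceilSet S) :
    ceilSet (insert g S) = ceilSet S :=
  le_antisymm (ceilSet_ceilSet S ▸ ceilSet_mono (insert_subset hg (subset_ceilSet S)))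
    (ceilSet_mono (subset_insert g S))

lemma ceilSet_eq_top_iff [Finite G] {S : Set G} : ceilSet S = ⊤ ↔ closure S = ⊤ := by
  refine ⟨fun h ↦ ?_, fun h ↦ top_le_iff.mp (h ▸ (closure_le _).mpr (subset_ceilSet S))⟩
  by_contra hS
  obtain ⟨M, hM, hSM⟩ := (eq_top_or_exists_le_coatom (closure S)).resolve_left hS
  exact hM.1 (top_le_iff.mp (h ▸ ceilSet_le_of_isCoatom hM (subset_closure.trans hSM)))

lemma IsStructOption.lt {I J : Subgroup G} (h : IsStructOption I J) : I < J := by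
  obtain ⟨g, hg, rfl⟩ := h
  exact lt_of_le_of_ne (fun x hx ↦ subset_ceilSet _ (Or.inl hx))
    fun h ↦ hg (h ▸ subset_ceilSet _ (Or.inr rfl))

lemma Subgroup.card_lt_card_of_lt [Finite G] {H K : Subgroup G} (h : H < K) :
    Nat.card H < Nat.card K :=
  Set.Finite.card_lt_card (toFinite _) h

lemma IsStructOption.card_lt [Finite G] {I J : Subgroup G} (h : IsStructOption I J) :
    Nat.card I < Nat.card J :=
  card_lt_card_of_lt h.lt

/-- The structure classes reached from a position `S` in one move: the options of `⌈S⌉`,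
together with `⌈S⌉` itself when `S` does not fill it. -/
lemma image_ceilSet_insert (S : Set G) :
    (fun g ↦ ceilSet (insert g S)) '' Sᶜ =
      {J | IsStructOption (ceilSet S) J} ∪ (fun _ ↦ ceilSet S) '' (ceilSet S \ S) := by
  have hopt : ∀ g, ceilSet (ceilSet S ∪ {g}) = ceilSet (insert g S) := fun g ↦ by
    rw [ceilSet_union_ceilSet, union_singleton]
  ext J
  constructor
  · rintro ⟨g, hgS, rfl⟩
    by_cases hg : g ∈ ceilSet S
    · exact Or.inr ⟨g, ⟨hg, hgS⟩, (ceilSet_insert_of_mem hg).symm⟩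
    · exact Or.inl ⟨g, hg, hopt g⟩
  · rintro (⟨g, hg, rfl⟩ | ⟨g, ⟨hg, hgS⟩, rfl⟩)
    · exact ⟨g, fun hgS ↦ hg (subset_ceilSet S hgS), (hopt g).symm⟩
    · exact ⟨g, hgS, ceilSet_insert_of_mem hg⟩

end CeilSet

section StructType

variable {G : Type*} [Group G]

open Classical in
/-- The type `(pty |I|, e, o)` of the structure class `X_I`, computed recursively from the
types of its options (for `I = ⊤` every position is terminal, of nim-value `0`). -/
noncomputable def structType [Finite G] (I : Subgroup G) : ℕ × ℕ × ℕ :=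
  if I = ⊤ then (Nat.card I % 2, 0, 0)
  else
    let T := range fun g : {g : G // g ∉ I} ↦ structType (ceilSet ((I : Set G) ∪ {g.1}))
    if Even (Nat.card I) then mex0 T else mex1 T
termination_by Nat.card G - Nat.card I
decreasing_by
  have := (show IsStructOption I _ from ⟨g.1, g.2, rfl⟩).card_lt
  have := card_le_card_group (ceilSet ((I : Set G) ∪ {g.1}))
  omega

variable [Finite G]

noncomputable def optionTypes (I : Subgroup G) : Set (ℕ × ℕ × ℕ) :=
  structType '' {J | IsStructOption I J}

lemma optionTypes_finite (I : Subgroup G) : (optionTypes I).Finite := (toFinite _).image _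

lemma structType_top : structType (⊤ : Subgroup G) = (Nat.card G % 2, 0, 0) := by
  rw [structType, if_pos rfl, card_top]

lemma structType_of_ne_top {I : Subgroup G} (hI : I ≠ ⊤) :
    structType I = if Even (Nat.card I) then mex0 (optionTypes I) else mex1 (optionTypes I) := by
  have hT : (range fun g : {g : G // g ∉ I} ↦ structType (ceilSet ((I : Set G) ∪ {g.1}))) =
      optionTypes I := by
    ext t
    simp [optionTypes, IsStructOption]
  rw [structType, if_neg hI, hT]

lemma structType_fst (I : Subgroup G) : (structType I).1 = Nat.card I % 2 := by
  by_cases hI : I = ⊤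
  · rw [hI, structType_top, card_top]
  · rw [structType_of_ne_top hI]
    split_ifs with h
    · exact (Nat.even_iff.mp h).symm
    · exact (Nat.odd_iff.mp (Nat.not_even_iff_odd.mp h)).symm

/-- The common nim-value of the positions of cardinality `n` in the class `X_J`. -/
noncomputable def nimValue (n : ℕ) (J : Subgroup G) : ℕ :=
  if Even n then (structType J).2.1 else (structType J).2.2

lemma nimValue_top (n : ℕ) : nimValue n (⊤ : Subgroup G) = 0 := by
  unfold nimValue
  split_ifs <;> simp [structType_top]

lemma image_nimValue_succ (n : ℕ) (s : Set (Subgroup G)) :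
    nimValue (n + 1) '' s =
      if Even n then typeO (structType '' s) else typeE (structType '' s) := by
  unfold nimValue
  split_ifs with h h' h' <;> simp_all [Nat.even_add_one, typeE_image, typeO_image]

/-- The singleton is the value of a move that stays inside the class of `I`. -/
lemma nimValue_eq_mex_insert {I : Subgroup G} (hI : I ≠ ⊤) (n : ℕ) :
    nimValue n I = mex (nimValue (n + 1) '' {J | IsStructOption I J} ∪ {nimValue (n + 1) I}) := by
  have hT := optionTypes_finite I
  rw [image_nimValue_succ, ← optionTypes]
  simp only [nimValue, Nat.even_add_one, structType_of_ne_top hI]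
  by_cases hn : Even n <;> by_cases hIe : Even (Nat.card I) <;>
    simp only [hn, hIe, if_true, if_false, not_true, not_false_eq_true]
  exacts [mex0_fst_eq hT, rfl, rfl, mex1_snd_eq hT]

lemma nimValue_eq_mex {I : Subgroup G} (hI : I ≠ ⊤) {n : ℕ}
    (hn : Even n ↔ Even (Nat.card I)) :
    nimValue n I = mex (nimValue (n + 1) '' {J | IsStructOption I J}) := by
  rw [image_nimValue_succ, ← optionTypes]
  unfold nimValue
  rw [structType_of_ne_top hI]
  split_ifs <;> simp_all [mex0, mex1]

end StructType

lemma Finset.card_compl_insert_lt {α : Type*} [Fintype α] [DecidableEq α] {s : Finset α}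
    {a : α} (ha : a ∉ s) : (insert a s)ᶜ.card < sᶜ.card :=
  Finset.card_lt_card (Finset.compl_ssubset_compl.mpr (Finset.ssubset_insert ha))

section Game

variable {G : Type*} [Group G] [Fintype G]

open Classical in
theorem gameNim_eq_nimValue (P : Finset G) : gameNim P = nimValue P.card (ceilSet (P : Set G)) := by
  rw [gameNim]
  split_ifs with htop
  · rw [ceilSet_eq_top_iff.mpr htop, nimValue_top]
  set I := ceilSet (P : Set G)
  have hI : I ≠ ⊤ := mt ceilSet_eq_top_iff.mp htop
  have hoptions : {n | ∃ g : {g : G // g ∉ P}, gameNim (insert g.1 P) = n} =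
      nimValue (P.card + 1) '' ((fun g ↦ ceilSet (insert g (P : Set G))) '' (P : Set G)ᶜ) := by
    ext n
    simp only [mem_ofPred_eq, image_image, mem_image, mem_compl_iff, Finset.mem_coe]
    refine ⟨fun ⟨⟨g, hg⟩, h⟩ ↦ ⟨g, hg, ?_⟩,
      fun ⟨g, hg, h⟩ ↦ ⟨⟨g, hg⟩, ?_⟩⟩
    all_goals rw [← h, gameNim_eq_nimValue, Finset.card_insert_of_notMem hg, Finset.coe_insert]
  rw [hoptions, image_ceilSet_insert, image_union, image_image]
  rcases (I \ P : Set G).eq_empty_or_nonempty with hfull | hpart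
  · have hPI : (P : Set G) = I := (subset_ceilSet _).antisymm (sdiff_eq_empty.mp hfull)
    have hcard : P.card = Nat.card I := by
      rw [← Set.ncard_coe_finset, hPI, ← Nat.card_coe_set_eq]
      rfl
    rw [hfull, image_empty, union_empty, nimValue_eq_mex hI (by rw [hcard])]
  · rw [hpart.image_const]
    exact (nimValue_eq_mex_insert hI P.card).symm
termination_by Pᶜ.card
decreasing_by all_goals exact Finset.card_compl_insert_lt hg

end Game

section Deficiency

variable {G : Type*} [Group G] [Fintype G] {S T : Set G} {I J K : Subgroup G}

lemma deficiency_le_card {Q : Finset G} (h : closure (S ∪ Q) = ⊤) : deficiency S ≤ Q.card :=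
  Nat.sInf_le ⟨Q, rfl, h⟩

lemma exists_card_eq_deficiency (S : Set G) :
    ∃ Q : Finset G, Q.card = deficiency S ∧ closure (S ∪ Q) = ⊤ :=
  Nat.sInf_mem (s := {n | ∃ Q : Finset G, Q.card = n ∧ closure (S ∪ Q) = ⊤})
    ⟨_, Finset.univ, rfl, by simp⟩

lemma deficiency_anti (h : S ⊆ T) : deficiency T ≤ deficiency S := by
  obtain ⟨Q, hQ, htop⟩ := exists_card_eq_deficiency S
  exact hQ ▸ deficiency_le_card
    (top_le_iff.mp (htop ▸ closure_mono (union_subset_union_left _ h)))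

lemma deficiency_ceilSet_union (S X : Set G) :
    deficiency (ceilSet S ∪ X : Set G) = deficiency (S ∪ X) := by
  unfold deficiency
  congr 1
  ext n
  refine exists_congr fun Q ↦ and_congr_right fun _ ↦ ?_
  rw [← ceilSet_eq_top_iff, ← ceilSet_eq_top_iff, union_assoc, union_assoc,
    ceilSet_union_ceilSet]

lemma deficiency_ceilSet (S : Set G) : deficiency (ceilSet S : Set G) = deficiency S := by
  simpa using deficiency_ceilSet_union S ∅

lemma deficiency_le_deficiency_insert_add_one (S : Set G) (g : G) :
    deficiency S ≤ deficiency (insert g S) + 1 := by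
  classical
  obtain ⟨Q, hQ, htop⟩ := exists_card_eq_deficiency (insert g S)
  calc deficiency S ≤ (insert g Q).card := deficiency_le_card (by
        rwa [Finset.coe_insert, union_insert, ← insert_union])
    _ ≤ deficiency (insert g S) + 1 := hQ ▸ Finset.card_insert_le g Q

lemma deficiency_eq_zero_iff : deficiency S = 0 ↔ closure S = ⊤ := by
  refine ⟨fun h ↦ ?_, fun h ↦ Nat.le_zero.mp (deficiency_le_card (Q := ∅) (by simpa))⟩
  obtain ⟨Q, hQ, htop⟩ := exists_card_eq_deficiency S
  rw [h, Finset.card_eq_zero] at hQ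
  simpa [hQ] using htop

lemma deficiency_coe_eq_zero_iff : deficiency (I : Set G) = 0 ↔ I = ⊤ := by
  rw [deficiency_eq_zero_iff, closure_eq]

/-- Take `g ∉ I` in a generating complement of `I` of minimal size. -/
lemma exists_deficiency_union_singleton_add_one (hI : I ≠ ⊤) :
    ∃ g ∉ I, deficiency ((I : Set G) ∪ {g}) + 1 = deficiency (I : Set G) := by
  classical
  obtain ⟨Q, hQ, htop⟩ := exists_card_eq_deficiency (I : Set G)
  obtain ⟨g, hgQ, hgI⟩ : ∃ g ∈ Q, g ∉ I := by
    by_contra! hQI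
    exact hI (top_le_iff.mp (htop ▸ (closure_le I).mpr (union_subset subset_rfl hQI)))
  refine ⟨g, hgI, le_antisymm ?_ ?_⟩
  · have h := deficiency_le_card (S := (I : Set G) ∪ {g}) (Q := Q.erase g) (by
      rwa [Finset.coe_erase, union_singleton, insert_union, ← union_insert,
        insert_sdiff_singleton, insert_eq_of_mem (Finset.mem_coe.mpr hgQ)])
    rw [Finset.card_erase_of_mem hgQ] at h
    have := Finset.card_pos.mpr ⟨g, hgQ⟩
    omega
  · simpa [union_singleton] using deficiency_le_deficiency_insert_add_one (I : Set G) g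

lemma IsStructOption.deficiency_le (h : IsStructOption I J) :
    deficiency (J : Set G) ≤ deficiency (I : Set G) := by
  obtain ⟨g, -, rfl⟩ := h
  exact (deficiency_ceilSet _).trans_le (deficiency_anti subset_union_left)

lemma IsStructOption.deficiency_union_le (h : IsStructOption I J) (X : Set G) :
    deficiency ((I : Set G) ∪ X) ≤ deficiency ((J : Set G) ∪ X) + 1 := by
  obtain ⟨g, -, rfl⟩ := h
  rw [deficiency_ceilSet_union, union_singleton, insert_union]
  exact deficiency_le_deficiency_insert_add_one _ g

lemma IsStructOption.deficiency_le_add_one (h : IsStructOption I J) :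
    deficiency (I : Set G) ≤ deficiency (J : Set G) + 1 := by
  simpa using h.deficiency_union_le ∅

end Deficiency

section OrderTwo

variable {G : Type*} [Group G] {I K : Subgroup G} {u : G}

lemma even_card_of_orderOf_eq_two_mem (hu : orderOf u = 2) (h : u ∈ K) : Even (Nat.card K) :=
  even_iff_two_dvd.mpr (hu ▸ K.orderOf_dvd_natCard h)

lemma exists_orderOf_eq_two_mem [Finite G] (hK : Even (Nat.card K)) :
    ∃ u ∈ K, orderOf u = 2 := by
  have : Fact (Nat.Prime 2) := ⟨Nat.prime_two⟩
  obtain ⟨x, hx⟩ := exists_prime_orderOf_dvd_card' (G := K) 2 (even_iff_two_dvd.mp hK)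
  exact ⟨x, x.2, (orderOf_coe x).trans hx⟩

lemma isStructOption_ceilSet_union_of_orderOf_eq_two (hI : ¬Even (Nat.card I))
    (hu : orderOf u = 2) :
    IsStructOption I (ceilSet ((I : Set G) ∪ {u})) ∧
      Even (Nat.card (ceilSet ((I : Set G) ∪ {u}))) :=
  ⟨⟨u, fun h ↦ hI (even_card_of_orderOf_eq_two_mem hu h), rfl⟩,
    even_card_of_orderOf_eq_two_mem hu (subset_ceilSet _ (Or.inr rfl))⟩

end OrderTwo

section Etype

variable {G : Type*} [Group G] [Fintype G] {I J K : Subgroup G}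

def HasEvenOptionOfEqDeficiency (I : Subgroup G) : Prop :=
  ∃ J : Subgroup G, IsStructOption I J ∧ Even (Nat.card J) ∧
    deficiency (J : Set G) = deficiency (I : Set G)

lemma hasEvenOptionOfEqDeficiency_of_le (hI : ¬Even (Nat.card I)) (hIK : I ≤ K)
    (hK : Even (Nat.card K)) (hd : deficiency (K : Set G) = deficiency (I : Set G)) :
    HasEvenOptionOfEqDeficiency I := by
  obtain ⟨u, huK, hu⟩ := exists_orderOf_eq_two_mem hK
  obtain ⟨hopt, heven⟩ := isStructOption_ceilSet_union_of_orderOf_eq_two hI hu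
  refine ⟨_, hopt, heven, le_antisymm hopt.deficiency_le ?_⟩
  rw [deficiency_ceilSet, ← hd]
  exact deficiency_anti (union_subset hIK (singleton_subset_iff.mpr huK))

/-- The deficiency drop from `I` to `J` is undone by adjoining to `J` an involution of an even
subgroup `K ⊇ I` with `δ(K) ≥ δ(I)`. -/
lemma IsStructOption.hasEvenOptionOfEqDeficiency (hJ : IsStructOption I J)
    (hJo : ¬Even (Nat.card J)) (hdJ : deficiency (J : Set G) + 1 = deficiency (I : Set G))
    (hIK : I ≤ K) (hK : Even (Nat.card K))
    (hdK : deficiency (I : Set G) ≤ deficiency (K : Set G)) :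
    HasEvenOptionOfEqDeficiency J := by
  obtain ⟨u, huK, hu⟩ := exists_orderOf_eq_two_mem hK
  obtain ⟨hopt, heven⟩ := isStructOption_ceilSet_union_of_orderOf_eq_two hJo hu
  refine ⟨_, hopt, heven, le_antisymm hopt.deficiency_le ?_⟩
  have hKu := deficiency_anti (union_subset hIK (singleton_subset_iff.mpr huK))
  have hJu := hJ.deficiency_union_le {u}
  rw [deficiency_ceilSet]
  omega

open Classical in
noncomputable def smoothness (I : Subgroup G) : ℕ :=
  if Even (Nat.card I) then 2 else if HasEvenOptionOfEqDeficiency I then 1 else 0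

noncomputable def etype (I : Subgroup G) : EType :=
  ((structType I).1, (structType I).2.1, (structType I).2.2, smoothness I)

noncomputable def optionEtypes (I : Subgroup G) (k : ℕ) : Set EType :=
  etype '' {J | IsStructOption I J ∧ deficiency (J : Set G) = k}

lemma smoothness_eq_one_iff :
    smoothness I = 1 ↔ ¬Even (Nat.card I) ∧ HasEvenOptionOfEqDeficiency I := by
  unfold smoothness
  split_ifs <;> simp_all

lemma smoothness_eq_zero_iff :
    smoothness I = 0 ↔ ¬Even (Nat.card I) ∧ ¬HasEvenOptionOfEqDeficiency I := by
  unfold smoothness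
  split_ifs <;> simp_all

lemma pi1_image_etype (s : Set (Subgroup G)) : pi1 (etype '' s) =
    (fun J : Subgroup G ↦ Nat.card J % 2) '' s := by
  ext; simp [pi1, etype, structType_fst]

lemma pi4_image_etype (s : Set (Subgroup G)) : pi4 (etype '' s) = smoothness '' s := by
  ext; simp [pi4, etype]

lemma dropPi4_image_etype (s : Set (Subgroup G)) : dropPi4 (etype '' s) = structType '' s := by
  ext; simp [dropPi4, etype]

lemma zero_mem_pi1_optionEtypes_iff {k : ℕ} (hk : deficiency (I : Set G) = k) :
    0 ∈ pi1 (optionEtypes I k) ↔ HasEvenOptionOfEqDeficiency I := by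
  subst hk
  simp only [optionEtypes, pi1_image_etype, mem_image, mem_ofPred_eq, Nat.even_iff,
    HasEvenOptionOfEqDeficiency]
  exact exists_congr fun J ↦ by tauto

open Classical in
lemma one_sub_minPi1 (A : Set EType) : 1 - minPi1 A = if 0 ∈ pi1 A then 1 else 0 := by
  have hmin : minPi1 A = 0 ↔ 0 ∈ pi1 A := by
    unfold minPi1
    split_ifs with hA
    · simp [hA, pi1]
    · have : (pi1 A).Nonempty := by
        obtain ⟨t, ht⟩ := nonempty_iff_ne_empty.mpr hA
        exact ⟨t.1, t, ht, rfl⟩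
      simp [Nat.sInf_eq_zero, this.ne_empty]
  split_ifs with h
  · rw [hmin.mpr h]
  · exact Nat.sub_eq_zero_of_le (Nat.one_le_iff_ne_zero.mpr (mt hmin.mp h))

variable {k : ℕ}

lemma optionEtypes_union (hk : deficiency (I : Set G) = k + 1) :
    optionEtypes I (k + 1) ∪ optionEtypes I k = etype '' {J | IsStructOption I J} := by
  rw [optionEtypes, optionEtypes, ← image_union]
  congr 1
  ext J
  simp only [mem_union, mem_ofPred_eq, ← and_or_left, and_iff_left_iff_imp]
  intro hJ
  have := hJ.deficiency_le
  have := hJ.deficiency_le_add_one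
  omega

lemma optionEtypes_nonempty (hk : deficiency (I : Set G) = k + 1) (hI : I ≠ ⊤) :
    (optionEtypes I k).Nonempty := by
  obtain ⟨g, hg, hd⟩ := exists_deficiency_union_singleton_add_one hI
  refine ⟨_, ceilSet ((I : Set G) ∪ {g}), ⟨⟨g, hg, rfl⟩, ?_⟩, rfl⟩
  rw [deficiency_ceilSet]
  omega

lemma feasible0_optionEtypes (hk : deficiency (I : Set G) = k + 1) (hI : I ≠ ⊤)
    (hIe : Even (Nat.card I)) :
    Feasible0 (optionEtypes I (k + 1)) (optionEtypes I k) := by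
  refine ⟨(optionEtypes_nonempty hk hI).ne_empty, ?_⟩
  rw [optionEtypes_union hk, pi1_image_etype]
  rintro ⟨J, hJ, hJodd : Nat.card J % 2 = 1⟩
  have := Nat.even_iff.mp <|
    even_iff_two_dvd.mpr ((even_iff_two_dvd.mp hIe).trans (card_dvd_of_le hJ.lt.le))
  omega

lemma etype_eq_emex0 (hk : deficiency (I : Set G) = k + 1) (hI : I ≠ ⊤)
    (hIe : Even (Nat.card I)) :
    etype I = emex0 (optionEtypes I (k + 1)) (optionEtypes I k) := by
  rw [emex0, optionEtypes_union hk, dropPi4_image_etype, ← optionTypes, etype,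
    structType_of_ne_top hI, smoothness, if_pos hIe, if_pos hIe]

lemma feasible1_optionEtypes (hG : Even (Nat.card G)) (hk : deficiency (I : Set G) = k + 1)
    (hI : I ≠ ⊤) (hIo : ¬Even (Nat.card I)) :
    Feasible1 (optionEtypes I (k + 1)) (optionEtypes I k) := by
  refine ⟨(optionEtypes_nonempty hk hI).ne_empty, ?_, ?_, ?_⟩
  · obtain ⟨u, -, hu⟩ :=
      exists_orderOf_eq_two_mem (K := (⊤ : Subgroup G)) (by rwa [card_top])
    obtain ⟨hopt, heven⟩ := isStructOption_ceilSet_union_of_orderOf_eq_two hIo hu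
    rw [optionEtypes_union hk, pi1_image_etype]
    exact ⟨_, hopt, Nat.even_iff.mp heven⟩
  · rintro ⟨_, ⟨J, ⟨hJ, hdJ⟩, rfl⟩, hs⟩
    obtain ⟨-, J', hJ', hJ'e, hdJ'⟩ := smoothness_eq_one_iff.mp hs
    exact (zero_mem_pi1_optionEtypes_iff hk).mpr <| hasEvenOptionOfEqDeficiency_of_le hIo
      (hJ.lt.le.trans hJ'.lt.le) hJ'e (by rw [hdJ', hdJ, hk])
  · rintro ⟨_, ⟨J, ⟨hJ, hdJ⟩, rfl⟩, hs⟩ h0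
    obtain ⟨hJo, hJno⟩ := smoothness_eq_zero_iff.mp hs
    obtain ⟨K, hK, hKe, hdK⟩ := (zero_mem_pi1_optionEtypes_iff hk).mp h0
    exact hJno (hJ.hasEvenOptionOfEqDeficiency hJo (by rw [hdJ, hk]) hK.lt.le hKe hdK.ge)

lemma etype_eq_emex1 (hk : deficiency (I : Set G) = k + 1) (hI : I ≠ ⊤)
    (hIo : ¬Even (Nat.card I)) :
    etype I = emex1 (optionEtypes I (k + 1)) (optionEtypes I k) := by
  have hs : smoothness I = 1 - minPi1 (optionEtypes I (k + 1)) := by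
    rw [one_sub_minPi1, zero_mem_pi1_optionEtypes_iff hk, smoothness, if_neg hIo]
  rw [emex1, optionEtypes_union hk, dropPi4_image_etype, ← optionTypes, etype,
    structType_of_ne_top hI, if_neg hIo, hs]

end Etype

lemma Ebarkl_zero (l : ℕ) : Ebarkl 0 l = {((0, 0, 0, 2) : EType)} := by
  rw [Ebarkl]

lemma mem_Ebarkl_succ_succ {k l : ℕ} {A B : Set EType} {t : EType}
    (hA : A ⊆ Ebarkl (k + 1) l) (hB : B ⊆ Ebar k)
    (h : (Feasible0 A B ∧ t = emex0 A B) ∨ (Feasible1 A B ∧ t = emex1 A B)) :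
    t ∈ Ebarkl (k + 1) (l + 1) := by
  rw [Ebarkl]
  exact ⟨A, B, hA, hB, h⟩

lemma Ebarkl_mono (k : ℕ) : Monotone (Ebarkl k) := by
  refine monotone_nat_of_le_succ fun l ↦ ?_
  cases k with
  | zero => simp [Ebarkl_zero]
  | succ k =>
    induction l with
    | zero =>
      rintro t ht
      rw [Ebarkl] at ht
      obtain ⟨B, hB, h⟩ := ht
      exact mem_Ebarkl_succ_succ (empty_subset _) hB h
    | succ l ih =>
      rintro t ht
      rw [Ebarkl] at ht
      obtain ⟨A, B, hA, hB, h⟩ := ht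
      exact mem_Ebarkl_succ_succ (hA.trans ih) hB h

theorem etype_mem_Ebarkl {G : Type*} [Group G] [Fintype G] (hG : Even (Nat.card G))
    (I : Subgroup G) : etype I ∈ Ebarkl (deficiency (I : Set G)) (Nat.card G - Nat.card I) := by
  induction I using WellFoundedGT.induction with
  | _ I ih =>
  by_cases hI : I = ⊤
  · subst hI
    rw [deficiency_coe_eq_zero_iff.mpr rfl, Ebarkl_zero, etype, structType_top, smoothness,
      card_top, if_pos hG, Nat.even_iff.mp hG]
    rfl
  obtain ⟨k, hk⟩ := Nat.exists_eq_succ_of_ne_zero (mt deficiency_coe_eq_zero_iff.mp hI)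
  have hIG : Nat.card I < Nat.card G :=
    card_top (G := G) ▸ card_lt_card_of_lt (lt_top_iff_ne_top.mpr hI)
  obtain ⟨l, hl⟩ : ∃ l, Nat.card G - Nat.card I = l + 1 :=
    Nat.exists_eq_succ_of_ne_zero (by omega)
  rw [hk, hl]
  refine mem_Ebarkl_succ_succ (A := optionEtypes I (k + 1)) (B := optionEtypes I k) ?_ ?_ ?_
  · rintro _ ⟨J, ⟨hJ, hdJ⟩, rfl⟩
    have := hJ.card_lt
    have := card_le_card_group J
    exact Ebarkl_mono _ (by omega) (hdJ ▸ ih J hJ.lt)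
  · rintro _ ⟨J, ⟨hJ, hdJ⟩, rfl⟩
    exact mem_iUnion_of_mem _ (hdJ ▸ ih J hJ.lt)
  · by_cases hIe : Even (Nat.card I)
    · exact Or.inl ⟨feasible0_optionEtypes hk hI hIe, etype_eq_emex0 hk hI hIe⟩
    · exact Or.inr ⟨feasible1_optionEtypes hG hk hI hIe, etype_eq_emex1 hk hI hIe⟩

lemma IsEtypeOf.eq_etype {G : Type} [Group G] [Fintype G] {I : Subgroup G} {t : EType}
    (h : IsEtypeOf G I t) : t = etype I := by
  obtain ⟨p, e, o, s⟩ := t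
  obtain ⟨hp, ⟨P₀, hP₀, hP₀e⟩, he, ⟨P₁, hP₁, hP₁o⟩, ho, hs2, hs01⟩ := h
  have he' := he P₀ hP₀ hP₀e
  have ho' := ho P₁ hP₁ hP₁o
  rw [gameNim_eq_nimValue, nimValue, hP₀, if_pos hP₀e] at he'
  rw [gameNim_eq_nimValue, nimValue, hP₁, if_neg (Nat.not_even_iff_odd.mpr hP₁o)] at ho'
  simp only [etype, structType_fst, Prod.mk.injEq]
  refine ⟨hp, he'.symm, ho'.symm, ?_⟩
  unfold smoothness
  split_ifs with hIe hopt
  exacts [hs2 hIe, (hs01 (Nat.not_even_iff_odd.mp hIe)).1 hopt,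
    (hs01 (Nat.not_even_iff_odd.mp hIe)).2 hopt]

/-- Every extended type that actually occurs with deficiency `k` in a finite
group of even order is feasible: `E_k ⊆ Ē_k`. -/
theorem Espec_subset_Ebar (k : ℕ) : Espec k ⊆ Ebar k := by
  rintro t ⟨G, _, _, hG, I, -, rfl, ht⟩
  rw [ht.eq_etype]
  exact mem_iUnion_of_mem _ (etype_mem_Ebarkl (Nat.card_eq_fintype_card (α := G) ▸ hG) I)
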